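/- Let Θ ∈ L2(0,1), σ > 0, δ > 0, and R ≥ 0, and define h: L2(0,1) → ℝ by h(B) = (σ² + E[(B−Θ)²]/δ)^{1/2}. Then h is m-strongly convex on the ball {B ∈ L2(0,1) : E[(B−Θ)²]^{1/2} ≤ R} with m = (σ²/δ)/(σ² + R²/δ)^{3/2}; that is, for all B₁, B₂ in this ball and all α ∈ [0,1]: h(α·B₁ + (1−α)·B₂) ≤ α·h(B₁) + (1−α)·h(B₂) − (m/2)·α·(1−α)·E[(B₁−B₂)²]. -/
import Mathlib


open MeasureTheory ProbabilityTheory Filter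
open scoped ENNReal NNReal

noncomputable section

/-- Lebesgue measure restricted to the interval `(0,1)`. -/
def unitMeasure : Measure ℝ := volume.restrict (Set.Ioo (0:ℝ) 1)

/-- The Hilbert space `L2(0,1)`. -/
abbrev L2 : Type := Lp ℝ 2 unitMeasure

/-- The law (pushforward of Lebesgue measure on `(0,1)`) of `X ∈ L2(0,1)`. -/
def lawOf (X : L2) : Measure ℝ := Measure.map (fun t => X t) unitMeasure

/-- The joint law of a pair of elements of `L2(0,1)`. -/
def lawOf2 (X G : L2) : Measure (ℝ × ℝ) :=
  Measure.map (fun t => (X t, G t)) unitMeasure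

/-- Membership in the Wasserstein space `P₂(ℝ)`. -/
def MemP2 (μ : Measure ℝ) : Prop :=
  IsProbabilityMeasure μ ∧ Integrable (fun x : ℝ => x ^ 2) μ

/-- Membership in the Wasserstein space `P₂(ℝ²)`. -/
def MemP2Prod (π : Measure (ℝ × ℝ)) : Prop :=
  IsProbabilityMeasure π ∧ Integrable (fun q : ℝ × ℝ => q.1 ^ 2 + q.2 ^ 2) π

/-- `π` is a coupling of `μ` and `ν`. -/
def IsCoupling (π : Measure (ℝ × ℝ)) (μ ν : Measure ℝ) : Prop :=
  π.fst = μ ∧ π.snd = ν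

/-- Squared Wasserstein-2 distance on `P₂(ℝ)`. -/
def W2sq (μ ν : Measure ℝ) : ℝ :=
  sInf {r : ℝ | ∃ π : Measure (ℝ × ℝ), IsCoupling π μ ν ∧ r = ∫ q, (q.1 - q.2) ^ 2 ∂π}

/-- The Wasserstein-2 distance on `P₂(ℝ)`. -/
def W2 (μ ν : Measure ℝ) : ℝ := Real.sqrt (W2sq μ ν)

/-- Squared Wasserstein-2 distance on `P₂(ℝ²)` (Euclidean cost). -/
def W2sqProd (μ ν : Measure (ℝ × ℝ)) : ℝ :=
  sInf {r : ℝ | ∃ π : Measure ((ℝ × ℝ) × (ℝ × ℝ)), π.fst = μ ∧ π.snd = ν ∧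
    r = ∫ q, ((q.1.1 - q.2.1) ^ 2 + (q.1.2 - q.2.2) ^ 2) ∂π}

/-- The Wasserstein-2 distance on `P₂(ℝ²)`. -/
def W2Prod (μ ν : Measure (ℝ × ℝ)) : ℝ := Real.sqrt (W2sqProd μ ν)

/-- Convexity of an `ℝ ∪ {+∞}`-valued function. -/
def ConvexE {E : Type*} [AddCommMonoid E] [Module ℝ E] (f : E → EReal) : Prop :=
  ∀ x y : E, ∀ a b : ℝ, 0 ≤ a → 0 ≤ b → a + b = 1 →
    f (a • x + b • y) ≤ (a : EReal) * f x + (b : EReal) * f y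

/-- Objective of the scalar proximal problem. -/
def obj1 (ρ : ℝ → EReal) (y x : ℝ) : EReal :=
  (((1:ℝ)/2 * (y - x) ^ 2 : ℝ) : EReal) + ρ x

/-- `x` is the unique minimizer of `z ↦ ½(y−z)² + ρ(z)`. -/
def IsProx1 (ρ : ℝ → EReal) (y x : ℝ) : Prop :=
  (∀ z : ℝ, obj1 ρ y x ≤ obj1 ρ y z) ∧ ∀ z : ℝ, obj1 ρ y z ≤ obj1 ρ y x → z = x

/-- Objective of the proximal problem on `ℝ^p` (Euclidean norm). -/
def objPi {p : ℕ} (f : (Fin p → ℝ) → EReal) (y x : Fin p → ℝ) : EReal :=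
  (((1:ℝ)/2 * ∑ i, (y i - x i) ^ 2 : ℝ) : EReal) + f x

/-- `x` is the unique minimizer of `z ↦ ½‖y−z‖² + f(z)` on `ℝ^p`. -/
def IsProxPi {p : ℕ} (f : (Fin p → ℝ) → EReal) (y x : Fin p → ℝ) : Prop :=
  (∀ z, objPi f y x ≤ objPi f y z) ∧ ∀ z, objPi f y z ≤ objPi f y x → z = x

/-- Objective of the proximal problem on `L2(0,1)`. -/
def objL2 (f : L2 → EReal) (Y X : L2) : EReal :=
  (((1:ℝ)/2 * ∫ t, (Y t - X t) ^ 2 ∂unitMeasure : ℝ) : EReal) + f X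

/-- `P` is the unique minimizer of `X ↦ ½E[(Y−X)²] + f(X)` on `L2(0,1)`. -/
def IsProxL2 (f : L2 → EReal) (Y P : L2) : Prop :=
  (∀ X, objL2 f Y P ≤ objL2 f Y X) ∧ ∀ X, objL2 f Y X ≤ objL2 f Y P → X = P

/-- Permutation-symmetry of a function on `ℝ^p`. -/
def SymmPi {p : ℕ} (f : (Fin p → ℝ) → EReal) : Prop :=
  ∀ (σ : Equiv.Perm (Fin p)) (x : Fin p → ℝ), f (x ∘ σ) = f x

/-- Symmetry (law-invariance) of a function on `L2(0,1)`. -/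
def SymmL2 (f : L2 → EReal) : Prop :=
  ∀ X X' : L2, lawOf X = lawOf X' → f X = f X'

/-- `G` belongs to the subdifferential of `f` at `X`. -/
def InSubdiff (f : L2 → EReal) (X G : L2) : Prop :=
  ∀ X' : L2, f X + ((∫ t, G t * (X' t - X t) ∂unitMeasure : ℝ) : EReal) ≤ f X'

/-- Joint cyclic monotonicity of a set of measures on `ℝ²`. -/
def JointCycMono (K : Set (Measure (ℝ × ℝ))) : Prop :=
  ∀ (n : ℕ) (π : Fin n → Measure (ℝ × ℝ)), (∀ j, π j ∈ K) →
    ∀ X G : Fin n → L2, (∀ j, lawOf2 (X j) (G j) = π j) →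
      ∀ σ : Equiv.Perm (Fin n),
        ∑ j, ∫ t, X j t * G (σ j) t ∂unitMeasure ≤
          ∑ j, ∫ t, X j t * G j t ∂unitMeasure

/-- The standard Gaussian measure `N(0, I_p)` on `ℝ^p`. -/
def stdGaussPi (p : ℕ) : Measure (Fin p → ℝ) := Measure.pi fun _ => gaussianReal 0 1

/-- Convolution `μ * N(0, τ²)`. -/
def gaussConv (μ : Measure ℝ) (τ : ℝ) : Measure ℝ :=
  Measure.map (fun q : ℝ × ℝ => q.1 + q.2) (μ.prod (gaussianReal 0 (Real.toNNReal (τ ^ 2))))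

/-- Empirical distribution of the coordinates of a vector in `ℝ^p`. -/
def empDist {p : ℕ} (θ : Fin p → ℝ) : Measure ℝ :=
  ((p : ℝ≥0∞))⁻¹ • ∑ j : Fin p, Measure.dirac (θ j)

/-- Empirical joint distribution of the coordinate pairs of two vectors in `ℝ^p`. -/
def empPair {p : ℕ} (a b : Fin p → ℝ) : Measure (ℝ × ℝ) :=
  ((p : ℝ≥0∞))⁻¹ • ∑ j : Fin p, Measure.dirac (a j, b j)

/-- Non-decreasing and 1-Lipschitz (the class `PR₁`). -/
def IsPR1 (η : ℝ → ℝ) : Prop :=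
  Monotone η ∧ ∀ y y' : ℝ, |η y - η y'| ≤ |y - y'|



open scoped RealInnerProductSpace in
lemma aux_integral_sq_eq (f : L2) : ∫ t, (f t) ^ 2 ∂unitMeasure = ‖f‖ ^ 2 := by
  rw [← real_inner_self_eq_norm_sq, MeasureTheory.L2.inner_def]
  apply integral_congr_ae
  filter_upwards with t
  simp [sq, RCLike.inner_apply, starRingEnd_apply]

lemma aux_integral_sub_sq_eq (f g : L2) :
    ∫ t, (f t - g t) ^ 2 ∂unitMeasure = ‖f - g‖ ^ 2 := by
  rw [← aux_integral_sq_eq (f - g)]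
  apply integral_congr_ae
  filter_upwards [Lp.coeFn_sub f g] with t ht
  rw [ht, Pi.sub_apply]

open scoped RealInnerProductSpace in
lemma aux_norm_combo_sq (u v : L2) (α : ℝ) :
    ‖α • u + (1 - α) • v‖ ^ 2
      = α * ‖u‖ ^ 2 + (1 - α) * ‖v‖ ^ 2 - α * (1 - α) * ‖u - v‖ ^ 2 := by
  have h1 : ‖α • u + (1 - α) • v‖ ^ 2
      = α ^ 2 * ‖u‖ ^ 2 + 2 * (α * (1 - α)) * ⟪u, v⟫ + (1 - α) ^ 2 * ‖v‖ ^ 2 := by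
    rw [← real_inner_self_eq_norm_sq, ← real_inner_self_eq_norm_sq,
      ← real_inner_self_eq_norm_sq]
    simp only [inner_add_left, inner_add_right, real_inner_smul_left, real_inner_smul_right]
    rw [real_inner_comm v u]
    ring
  have h2 : ‖u - v‖ ^ 2 = ‖u‖ ^ 2 - 2 * ⟪u, v⟫ + ‖v‖ ^ 2 := by
    rw [← real_inner_self_eq_norm_sq, ← real_inner_self_eq_norm_sq,
      ← real_inner_self_eq_norm_sq]
    simp only [inner_sub_left, inner_sub_right]
    rw [real_inner_comm v u]
    ring
  rw [h1, h2]; ring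

set_option maxHeartbeats 1600000 in

set_option maxHeartbeats 1600000 in
lemma scalar_key (σ δ R m a b D α : ℝ) (hσ : 0 < σ) (hδ : 0 < δ) (hR : 0 ≤ R)
    (hm : m = (σ ^ 2 / δ) / (σ ^ 2 + R ^ 2 / δ) ^ ((3:ℝ)/2))
    (ha : 0 ≤ a) (hb : 0 ≤ b) (hD : 0 ≤ D)
    (haR : a ≤ R ^ 2) (hbR : b ≤ R ^ 2)
    (hDl : (Real.sqrt a - Real.sqrt b) ^ 2 ≤ D)
    (hα0 : 0 ≤ α) (hα1 : α ≤ 1)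
    (hc : 0 ≤ α * a + (1 - α) * b - α * (1 - α) * D) :
    Real.sqrt (σ ^ 2 + (α * a + (1 - α) * b - α * (1 - α) * D) / δ)
      ≤ α * Real.sqrt (σ ^ 2 + a / δ) + (1 - α) * Real.sqrt (σ ^ 2 + b / δ)
        - m / 2 * α * (1 - α) * D := by
  have hxpos : (0:ℝ) < σ ^ 2 + R ^ 2 / δ := by positivity
  set M := Real.sqrt (σ ^ 2 + R ^ 2 / δ) with hMdef
  have hM2 : M ^ 2 = σ ^ 2 + R ^ 2 / δ := Real.sq_sqrt hxpos.le
  have hMpos : 0 < M := Real.sqrt_pos.mpr hxpos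
  have hMσ : σ ≤ M := by
    have h0 : (0:ℝ) ≤ σ ^ 2 + R ^ 2 / δ := hxpos.le
    rw [hMdef, Real.le_sqrt hσ.le h0]
    nlinarith [div_nonneg (sq_nonneg R) hδ.le]
  have hM3 : (σ ^ 2 + R ^ 2 / δ) ^ ((3:ℝ)/2) = M ^ 3 := by
    rw [hMdef, Real.sqrt_eq_rpow, ← Real.rpow_natCast _ 3, ← Real.rpow_mul hxpos.le]
    norm_num
  have hm' : m = σ ^ 2 / (δ * M ^ 3) := by
    rw [hm, hM3]; field_simp
  have hmpos : 0 ≤ m := by rw [hm']; positivity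
  set s1 := Real.sqrt (σ ^ 2 + a / δ) with hs1def
  set s2 := Real.sqrt (σ ^ 2 + b / δ) with hs2def
  set c := α * a + (1 - α) * b - α * (1 - α) * D with hcdef
  set t := Real.sqrt (σ ^ 2 + c / δ) with htdef
  clear_value M s1 s2 t c
  have hs1sq : s1 ^ 2 = σ ^ 2 + a / δ := by
    rw [hs1def]; exact Real.sq_sqrt (by positivity)
  have hs2sq : s2 ^ 2 = σ ^ 2 + b / δ := by
    rw [hs2def]; exact Real.sq_sqrt (by positivity)
  have htsq : t ^ 2 = σ ^ 2 + c / δ := by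
    rw [htdef]; exact Real.sq_sqrt (by positivity)
  have hs1σ : σ ≤ s1 := by
    have h0 : (0:ℝ) ≤ σ ^ 2 + a / δ := by positivity
    rw [hs1def, Real.le_sqrt hσ.le h0]
    linarith [div_nonneg ha hδ.le]
  have hs2σ : σ ≤ s2 := by
    have h0 : (0:ℝ) ≤ σ ^ 2 + b / δ := by positivity
    rw [hs2def, Real.le_sqrt hσ.le h0]
    linarith [div_nonneg hb hδ.le]
  have htσ : σ ≤ t := by
    have h0 : (0:ℝ) ≤ σ ^ 2 + c / δ := by positivity
    rw [htdef, Real.le_sqrt hσ.le h0]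
    linarith [div_nonneg hc hδ.le]
  have hs1M : s1 ≤ M := by
    rw [hs1def, hMdef]
    apply Real.sqrt_le_sqrt
    have : a / δ ≤ R ^ 2 / δ := by gcongr
    linarith
  have hs2M : s2 ≤ M := by
    rw [hs2def, hMdef]
    apply Real.sqrt_le_sqrt
    have : b / δ ≤ R ^ 2 / δ := by gcongr
    linarith
  have hcR : c ≤ R ^ 2 := by
    have h1 : 0 ≤ α * (1 - α) * D := mul_nonneg (mul_nonneg hα0 (by linarith)) hD
    have h2 : α * a ≤ α * R ^ 2 := mul_le_mul_of_nonneg_left haR hα0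
    have h3 : (1 - α) * b ≤ (1 - α) * R ^ 2 :=
      mul_le_mul_of_nonneg_left hbR (by linarith)
    rw [hcdef]
    nlinarith [h1, h2, h3]
  have htM : t ≤ M := by
    rw [htdef, hMdef]
    apply Real.sqrt_le_sqrt
    have : c / δ ≤ R ^ 2 / δ := by gcongr
    linarith
  -- key1 : sqrt a * M ≤ R * s1
  have key1 : ∀ x : ℝ, 0 ≤ x → x ≤ R ^ 2 → ∀ s : ℝ, s ^ 2 = σ ^ 2 + x / δ → 0 ≤ s →
      Real.sqrt x * M ≤ R * s := by
    intro x hx hxR s hs hs0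
    have hsx : (Real.sqrt x * M) ^ 2 ≤ (R * s) ^ 2 := by
      have h1 : (Real.sqrt x) ^ 2 = x := Real.sq_sqrt hx
      have h2 : x * (R ^ 2 / δ) = R ^ 2 * (x / δ) := by ring
      have h3 : x * σ ^ 2 ≤ R ^ 2 * σ ^ 2 := mul_le_mul_of_nonneg_right hxR (sq_nonneg σ)
      rw [mul_pow, mul_pow, h1, hM2, hs]
      linarith [h2, h3]
    have h3 : 0 ≤ Real.sqrt x * M := by positivity
    have h4 : 0 ≤ R * s := mul_nonneg hR hs0
    have h5 := Real.sqrt_le_sqrt hsx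
    rwa [Real.sqrt_sq h3, Real.sqrt_sq h4] at h5
  have k1a : Real.sqrt a * M ≤ R * s1 := key1 a ha haR s1 hs1sq (by linarith)
  have k1b : Real.sqrt b * M ≤ R * s2 := key1 b hb hbR s2 hs2sq (by linarith)
  -- key2 : (s1-s2)^2 * (δ^2 * M^2) ≤ D * R^2
  have hdiff : (s1 - s2) * (s1 + s2) = (a - b) / δ := by
    have : (s1 - s2) * (s1 + s2) = s1 ^ 2 - s2 ^ 2 := by ring
    rw [this, hs1sq, hs2sq]; ring
  have hab : a - b = (Real.sqrt a - Real.sqrt b) * (Real.sqrt a + Real.sqrt b) := by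
    have h1 : (Real.sqrt a) ^ 2 = a := Real.sq_sqrt ha
    have h2 : (Real.sqrt b) ^ 2 = b := Real.sq_sqrt hb
    linear_combination h2 - h1
  have hsum : (Real.sqrt a + Real.sqrt b) * M ≤ R * (s1 + s2) := by
    have e1 : (Real.sqrt a + Real.sqrt b) * M = Real.sqrt a * M + Real.sqrt b * M := by ring
    have e2 : R * (s1 + s2) = R * s1 + R * s2 := by ring
    linarith [k1a, k1b]
  have hsumpos : 0 < s1 + s2 := by linarith
  have key2 : (s1 - s2) ^ 2 * (δ ^ 2 * M ^ 2) ≤ D * R ^ 2 := by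
    have h1 : ((s1 - s2) * (s1 + s2) * δ) ^ 2 = (a - b) ^ 2 := by
      rw [hdiff]; field_simp
    have h2 : (a - b) ^ 2 = (Real.sqrt a - Real.sqrt b) ^ 2 * (Real.sqrt a + Real.sqrt b) ^ 2 := by
      rw [hab]; ring
    have h3 : (Real.sqrt a + Real.sqrt b) ^ 2 * M ^ 2 ≤ R ^ 2 * (s1 + s2) ^ 2 := by
      have h0 : 0 ≤ (Real.sqrt a + Real.sqrt b) * M :=
        mul_nonneg (by positivity) hMpos.le
      calc (Real.sqrt a + Real.sqrt b) ^ 2 * M ^ 2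
          = ((Real.sqrt a + Real.sqrt b) * M) * ((Real.sqrt a + Real.sqrt b) * M) := by ring
        _ ≤ (R * (s1 + s2)) * (R * (s1 + s2)) := mul_self_le_mul_self h0 hsum
        _ = R ^ 2 * (s1 + s2) ^ 2 := by ring
    -- (s1-s2)^2 (s1+s2)^2 δ^2 M^2 = (√a-√b)^2 (√a+√b)^2 M^2 ≤ D R^2 (s1+s2)^2
    have h4 : (s1 - s2) ^ 2 * (s1 + s2) ^ 2 * δ ^ 2 * M ^ 2 ≤ D * R ^ 2 * (s1 + s2) ^ 2 := by
      have h5 : (s1 - s2) ^ 2 * (s1 + s2) ^ 2 * δ ^ 2 = (Real.sqrt a - Real.sqrt b) ^ 2 * (Real.sqrt a + Real.sqrt b) ^ 2 := by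
        calc (s1 - s2) ^ 2 * (s1 + s2) ^ 2 * δ ^ 2
            = ((s1 - s2) * (s1 + s2) * δ) ^ 2 := by ring
          _ = (a - b) ^ 2 := h1
          _ = (Real.sqrt a - Real.sqrt b) ^ 2 * (Real.sqrt a + Real.sqrt b) ^ 2 := h2
      calc (s1 - s2) ^ 2 * (s1 + s2) ^ 2 * δ ^ 2 * M ^ 2
          = (Real.sqrt a - Real.sqrt b) ^ 2 * ((Real.sqrt a + Real.sqrt b) ^ 2 * M ^ 2) := by
            linear_combination M ^ 2 * h5
        _ ≤ D * (R ^ 2 * (s1 + s2) ^ 2) := by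
            apply mul_le_mul hDl h3 (by positivity) hD
        _ = D * R ^ 2 * (s1 + s2) ^ 2 := by ring
    have h6 : 0 < (s1 + s2) ^ 2 := pow_pos hsumpos 2
    have h7 : ((s1 - s2) ^ 2 * (δ ^ 2 * M ^ 2)) * (s1 + s2) ^ 2 ≤ (D * R ^ 2) * (s1 + s2) ^ 2 := by
      linarith [h4]
    exact le_of_mul_le_mul_right h7 h6
  -- main identity
  set S := α * s1 + (1 - α) * s2 with hSdef
  have hSt : S ^ 2 - t ^ 2 = α * (1 - α) * (D / δ - (s1 - s2) ^ 2) := by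
    rw [hSdef]
    linear_combination α * hs1sq + (1 - α) * hs2sq - htsq - (1/δ) * hcdef
  have hδM2 : δ * M ^ 2 = δ * σ ^ 2 + R ^ 2 := by
    rw [hM2]
    field_simp
  have hmm3 : m * (δ * M ^ 3) = σ ^ 2 := by
    rw [hm']
    field_simp
  have hab0 : 0 ≤ α * (1 - α) := mul_nonneg hα0 (by linarith)
  have hkey : α * (1 - α) * ((s1 - s2) ^ 2 * (δ ^ 2 * M ^ 2)) ≤ α * (1 - α) * (D * R ^ 2) :=
    mul_le_mul_of_nonneg_left key2 hab0
  have hXd : (m * α * (1 - α) * D * M) * (δ ^ 2 * M ^ 2) = α * (1 - α) * D * (δ * σ ^ 2) := by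
    linear_combination (α * (1 - α) * D * δ) * hmm3
  have hRHSeq : (α * (1 - α) * (D / δ - (s1 - s2) ^ 2)) * (δ ^ 2 * M ^ 2)
      = α * (1 - α) * D * (δ * M ^ 2) - α * (1 - α) * ((s1 - s2) ^ 2 * (δ ^ 2 * M ^ 2)) := by
    field_simp
  have hDM2 : α * (1 - α) * D * (δ * M ^ 2) = α * (1 - α) * D * (δ * σ ^ 2) + α * (1 - α) * (D * R ^ 2) := by
    linear_combination (α * (1 - α) * D) * hδM2
  have h12 : (m * α * (1 - α) * D * M) * (δ ^ 2 * M ^ 2)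
      ≤ (α * (1 - α) * (D / δ - (s1 - s2) ^ 2)) * (δ ^ 2 * M ^ 2) := by
    linarith [hkey, hXd.le, hXd.ge, hRHSeq.le, hRHSeq.ge, hDM2.le, hDM2.ge]
  have hδM2pos : (0:ℝ) < δ ^ 2 * M ^ 2 := by positivity
  have hmain2 : m * α * (1 - α) * D * M ≤ α * (1 - α) * (D / δ - (s1 - s2) ^ 2) :=
    le_of_mul_le_mul_right h12 hδM2pos
  have hmain : m / 2 * α * (1 - α) * D * (S + t) ≤ S ^ 2 - t ^ 2 := by
    have hq0 : 0 ≤ m / 2 * α * (1 - α) * D :=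
      mul_nonneg (mul_nonneg (mul_nonneg (by linarith) hα0) (by linarith)) hD
    have hSt2 : S + t ≤ 2 * M := by
      have e1 : α * s1 ≤ α * M := mul_le_mul_of_nonneg_left hs1M hα0
      have e2 : (1 - α) * s2 ≤ (1 - α) * M := mul_le_mul_of_nonneg_left hs2M (by linarith)
      rw [hSdef]; linarith
    have h8 : m / 2 * α * (1 - α) * D * (S + t) ≤ m * α * (1 - α) * D * M := by
      have hp := mul_le_mul_of_nonneg_left hSt2 hq0
      have he : m / 2 * α * (1 - α) * D * (2 * M) = m * α * (1 - α) * D * M := by ring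
      linarith [hp, he.le, he.ge]
    linarith [h8, hmain2, hSt.le, hSt.ge]
  have hpos : 0 < S + t := by
    have e1 : 0 ≤ α * s1 := mul_nonneg hα0 (le_trans hσ.le hs1σ)
    have e2 : 0 ≤ (1 - α) * s2 := mul_nonneg (by linarith) (le_trans hσ.le hs2σ)
    rw [hSdef]; linarith
  have hfin : m / 2 * α * (1 - α) * D ≤ S - t := by
    have := hmain
    have h11 : m / 2 * α * (1 - α) * D * (S + t) ≤ (S - t) * (S + t) := by
      have he : (S - t) * (S + t) = S ^ 2 - t ^ 2 := by ring
      linarith [hmain, he.le, he.ge]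
    exact le_of_mul_le_mul_right h11 hpos
  rw [hSdef] at hfin
  linarith


/-- Lemma: local strong convexity of `B ↦ √(σ² + E[(B−Θ)²]/δ)`. -/
theorem sqrt_objective_strongly_convex (Θ : L2) (σ δ R : ℝ)
    (hσ : 0 < σ) (hδ : 0 < δ) (hR : 0 ≤ R)
    (m : ℝ) (hm : m = (σ ^ 2 / δ) / (σ ^ 2 + R ^ 2 / δ) ^ ((3:ℝ)/2)) :
    ∀ B₁ B₂ : L2,
      Real.sqrt (∫ t, (B₁ t - Θ t) ^ 2 ∂unitMeasure) ≤ R →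
      Real.sqrt (∫ t, (B₂ t - Θ t) ^ 2 ∂unitMeasure) ≤ R →
      ∀ α : ℝ, 0 ≤ α → α ≤ 1 →
        Real.sqrt (σ ^ 2 +
            (∫ t, ((α • B₁ + (1 - α) • B₂ : L2) t - Θ t) ^ 2 ∂unitMeasure) / δ)
          ≤ α * Real.sqrt (σ ^ 2 + (∫ t, (B₁ t - Θ t) ^ 2 ∂unitMeasure) / δ)
            + (1 - α) * Real.sqrt (σ ^ 2 + (∫ t, (B₂ t - Θ t) ^ 2 ∂unitMeasure) / δ)
            - m / 2 * α * (1 - α) * ∫ t, (B₁ t - B₂ t) ^ 2 ∂unitMeasure := by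
  intro B₁ B₂ h1 h2 α hα0 hα1
  have hw : (α • B₁ + (1 - α) • B₂ : L2) - Θ = α • (B₁ - Θ) + (1 - α) • (B₂ - Θ) := by
    module
  have hw2 : (B₁ - Θ) - (B₂ - Θ) = B₁ - B₂ := by abel
  have hI1 : ∫ t, (B₁ t - Θ t) ^ 2 ∂unitMeasure = ‖B₁ - Θ‖ ^ 2 := aux_integral_sub_sq_eq B₁ Θ
  have hI2 : ∫ t, (B₂ t - Θ t) ^ 2 ∂unitMeasure = ‖B₂ - Θ‖ ^ 2 := aux_integral_sub_sq_eq B₂ Θ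
  have hID : ∫ t, (B₁ t - B₂ t) ^ 2 ∂unitMeasure = ‖B₁ - B₂‖ ^ 2 := aux_integral_sub_sq_eq B₁ B₂
  have hexp : ‖α • (B₁ - Θ) + (1 - α) • (B₂ - Θ)‖ ^ 2
      = α * ‖B₁ - Θ‖ ^ 2 + (1 - α) * ‖B₂ - Θ‖ ^ 2 - α * (1 - α) * ‖B₁ - B₂‖ ^ 2 := by
    rw [aux_norm_combo_sq (B₁ - Θ) (B₂ - Θ) α, hw2]
  have hI3 : ∫ t, ((α • B₁ + (1 - α) • B₂ : L2) t - Θ t) ^ 2 ∂unitMeasure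
      = α * ‖B₁ - Θ‖ ^ 2 + (1 - α) * ‖B₂ - Θ‖ ^ 2 - α * (1 - α) * ‖B₁ - B₂‖ ^ 2 := by
    rw [aux_integral_sub_sq_eq (α • B₁ + (1 - α) • B₂) Θ, hw, hexp]
  rw [hI1] at h1
  rw [hI2] at h2
  rw [Real.sqrt_sq (norm_nonneg _)] at h1 h2
  have haR : ‖B₁ - Θ‖ ^ 2 ≤ R ^ 2 := pow_le_pow_left₀ (norm_nonneg _) h1 2
  have hbR : ‖B₂ - Θ‖ ^ 2 ≤ R ^ 2 := pow_le_pow_left₀ (norm_nonneg _) h2 2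
  have hDl : (Real.sqrt (‖B₁ - Θ‖ ^ 2) - Real.sqrt (‖B₂ - Θ‖ ^ 2)) ^ 2 ≤ ‖B₁ - B₂‖ ^ 2 := by
    rw [Real.sqrt_sq (norm_nonneg _), Real.sqrt_sq (norm_nonneg _)]
    have h3 : |‖B₁ - Θ‖ - ‖B₂ - Θ‖| ≤ ‖(B₁ - Θ) - (B₂ - Θ)‖ := abs_norm_sub_norm_le _ _
    rw [hw2] at h3
    have h4 := pow_le_pow_left₀ (abs_nonneg _) h3 2
    rw [sq_abs] at h4
    exact h4
  have hc : 0 ≤ α * ‖B₁ - Θ‖ ^ 2 + (1 - α) * ‖B₂ - Θ‖ ^ 2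
      - α * (1 - α) * ‖B₁ - B₂‖ ^ 2 := by
    rw [← hexp]; exact sq_nonneg _
  rw [hI1, hI2, hID, hI3]
  exact scalar_key σ δ R m (‖B₁ - Θ‖ ^ 2) (‖B₂ - Θ‖ ^ 2) (‖B₁ - B₂‖ ^ 2) α hσ hδ hR hm
    (sq_nonneg _) (sq_nonneg _) (sq_nonneg _) haR hbR hDl hα0 hα1 hc


end
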